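/- Let p be a prime, F = F_p, and k ≥ 2. The number of distinct functions f : F^k → F of the form f(x_1,...,x_k) = b·∏_{j=1}^k Q_{S_j}(x_j) + a, where a, b ∈ F are nonzero and S_1,...,S_k are intervals of F, is 2^k·(p-1)^{k+2}. -/
import Mathlib


open Finset

/-- The indicator function `Q_S` of the complement of `S`: `Q_S(x) = 0` if `x ∈ S`, else `1`. -/
noncomputable def Q {F : Type*} [Zero F] [One F] (S : Set F) (x : F) : F :=
  haveI := Classical.dec (x ∈ S)
  if x ∈ S then 0 else 1

/-- `S ⊆ F_p` is an interval if `S = {0,…,j}` or `Sᶜ = {0,…,j}` for some `0 ≤ j < p-1`. -/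
def IsInterval (p : ℕ) (S : Set (ZMod p)) : Prop :=
  ∃ j : ℕ, j < p - 1 ∧ (S = {x : ZMod p | x.val ≤ j} ∨ S = {x : ZMod p | x.val ≤ j}ᶜ)

/-- `f` is `<i:a:b>` canalizing: `f x = b` whenever `x i = a`. -/
def IsCanalizing {F : Type*} {n : ℕ} (f : (Fin n → F) → F) (i : Fin n) (a b : F) : Prop :=
  ∀ x, x i = a → f x = b

/-- The nested canalizing conditions for `f` along an ordered list `τ 0, τ 1, …` of
(distinct) variables, with canalizing input sets `S` and canalized output values `b`
(with `b (Fin.last m)` playing the role of the default output `b_{m+1}`). -/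
def NCAlong {F : Type*} {n m : ℕ} (f : (Fin n → F) → F) (τ : Fin m → Fin n)
    (S : Fin m → Set F) (b : Fin (m + 1) → F) : Prop :=
  (∀ k : Fin m, ∀ x : Fin n → F,
      (∀ j : Fin m, j < k → x (τ j) ∉ S j) → x (τ k) ∈ S k → f x = b k.castSucc) ∧
  (∀ x : Fin n → F, (∀ j : Fin m, x (τ j) ∉ S j) → f x = b (Fin.last m))

/-- `f : F_p^n → F_p` is a nested canalizing function. -/
def IsNCF (p n : ℕ) (f : (Fin n → ZMod p) → ZMod p) : Prop :=
  ∃ (σ : Equiv.Perm (Fin n)) (S : Fin n → Set (ZMod p)) (b : Fin (n + 1) → ZMod p),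
    (∀ i, IsInterval p (S i)) ∧
    b ⟨n - 1, Nat.lt_succ_of_le (Nat.sub_le n 1)⟩ ≠ b (Fin.last n) ∧
    NCAlong f (⇑σ) S b

/-- `f : F^n → F` is a generalized nested canalizing function (canalizing input sets are
arbitrary nonempty proper subsets). -/
def IsGNCF {F : Type*} [Field F] (n : ℕ) (f : (Fin n → F) → F) : Prop :=
  ∃ (σ : Equiv.Perm (Fin n)) (S : Fin n → Set F) (b : Fin (n + 1) → F),
    (∀ i, (S i).Nonempty ∧ S i ≠ Set.univ) ∧
    b ⟨n - 1, Nat.lt_succ_of_le (Nat.sub_le n 1)⟩ ≠ b (Fin.last n) ∧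
    NCAlong f (⇑σ) S b

/-- `nestedVal r m B c = m 0 * (m 1 * ( ⋯ (m (r-1) * c + B (r-1)) ⋯ ) + B 1) + B 0`,
the layered expression `M_1(M_2(⋯(B_{r+1} M_r + B_r)⋯) + B_2) + B_1` where `m i = M_{i+1}`,
`B i = B_{i+1}` and `c = B_{r+1}`. -/
def nestedVal {F : Type*} [Mul F] [Add F] : ℕ → (ℕ → F) → (ℕ → F) → F → F
  | 0, _, _, c => c
  | r + 1, m, B, c => m 0 * nestedVal r (fun i => m (i + 1)) (fun i => B (i + 1)) c + B 0

/-- `f = M_1(M_2(⋯(M_{r-1}(B_{r+1}·M_r + B_r) + B_{r-1})⋯) + B_2) + B_1` is a layered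
representation of `f` with `r` layers, where layer `i` (`0 ≤ i < r`, 0-indexed) has variable
index set `L i` (the `L i` partition `Fin n`), each variable `m` has canalizing set `T m`
(required to satisfy `Ok`), `M_{i+1} = ∏_{j ∈ L i} Q_{T j}(x_j)`, and the constants are
`B_1 = B 0 ∈ F`, `B_2 = B 1, …, B_{r+1} = B r` all nonzero, with
`B_r + B_{r+1} ≠ 0` whenever the last layer has just one variable. -/
def IsLayeredRep {F : Type*} [CommRing F] (Ok : Set F → Prop) (n : ℕ)
    (f : (Fin n → F) → F) (r : ℕ) (L : ℕ → Finset (Fin n)) (T : Fin n → Set F)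
    (B : ℕ → F) : Prop :=
  1 ≤ r ∧
  (∀ i < r, (L i).Nonempty) ∧
  (∀ i < r, ∀ j < r, i ≠ j → Disjoint (L i) (L j)) ∧
  (Finset.range r).biUnion L = Finset.univ ∧
  (∀ m : Fin n, Ok (T m)) ∧
  (∀ i, 1 ≤ i → i ≤ r → B i ≠ 0) ∧
  ((L (r - 1)).card = 1 → B (r - 1) + B r ≠ 0) ∧
  ∀ x : Fin n → F, f x = nestedVal r (fun i => ∏ j ∈ L i, Q (T j) (x j)) B (B r)


open scoped Classical

section Aux

variable {p : ℕ} [Fact p.Prime]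

lemma Q_eq_zero' {F : Type*} [Zero F] [One F] {S : Set F} {x : F} (h : x ∈ S) :
    Q S x = 0 := by simp [Q, h]

lemma Q_eq_one' {F : Type*} [Zero F] [One F] {S : Set F} {x : F} (h : x ∉ S) :
    Q S x = 1 := by simp [Q, h]

lemma prod_Q' {k : ℕ} (S : Fin k → Set (ZMod p)) (x : Fin k → ZMod p) :
    (∏ j, Q (S j) (x j)) = if ∀ j, x j ∉ S j then 1 else 0 := by
  split_ifs with h
  · exact Finset.prod_eq_one fun j _ => Q_eq_one' (h j)
  · push_neg at h
    obtain ⟨j, hj⟩ := h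
    exact Finset.prod_eq_zero (Finset.mem_univ j) (Q_eq_zero' hj)

lemma phi_eval' {k : ℕ} (a b : ZMod p) (S : Fin k → Set (ZMod p)) (x : Fin k → ZMod p) :
    b * (∏ j, Q (S j) (x j)) + a = if ∀ j, x j ∉ S j then b + a else a := by
  rw [prod_Q']; split_ifs <;> ring

lemma down_mem_zero' {j : ℕ} : (0 : ZMod p) ∈ {x : ZMod p | x.val ≤ j} := by
  haveI : NeZero p := ⟨(Fact.out : p.Prime).ne_zero⟩
  simp [Set.mem_setOf_eq, ZMod.val_zero]

lemma down_not_mem_top' {j : ℕ} (hj : j < p - 1) :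
    ((p - 1 : ℕ) : ZMod p) ∉ {x : ZMod p | x.val ≤ j} := by
  haveI : NeZero p := ⟨(Fact.out : p.Prime).ne_zero⟩
  have hp : 2 ≤ p := (Fact.out : p.Prime).two_le
  have hv : ((p - 1 : ℕ) : ZMod p).val = p - 1 := ZMod.val_natCast_of_lt (by omega)
  intro hmem
  rw [Set.mem_setOf_eq, hv] at hmem
  omega

lemma interval_nonempty' {S : Set (ZMod p)} (h : IsInterval p S) :
    S.Nonempty ∧ Sᶜ.Nonempty := by
  obtain ⟨j, hj, h | h⟩ := h
  · refine ⟨⟨0, h ▸ down_mem_zero'⟩, ⟨((p - 1 : ℕ) : ZMod p), ?_⟩⟩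
    rw [h]; exact down_not_mem_top' hj
  · refine ⟨⟨((p - 1 : ℕ) : ZMod p), ?_⟩, ⟨0, ?_⟩⟩
    · rw [h]; exact down_not_mem_top' hj
    · rw [h]; simp [down_mem_zero']

lemma param_inj' {k : ℕ} (hk : 2 ≤ k) (a b a' b' : ZMod p)
    (S S' : Fin k → Set (ZMod p)) (hb : b ≠ 0) (hb' : b' ≠ 0)
    (hS : ∀ j, (S j).Nonempty ∧ (S j)ᶜ.Nonempty)
    (hS' : ∀ j, (S' j).Nonempty ∧ (S' j)ᶜ.Nonempty)
    (heq : ∀ x : Fin k → ZMod p, b * (∏ j, Q (S j) (x j)) + a = b' * (∏ j, Q (S' j) (x j)) + a') :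
    a = a' ∧ b = b' ∧ S = S' := by
  choose u hu using fun j => (hS j).1
  choose v hv using fun j => (hS j).2
  choose u' hu' using fun j => (hS' j).1
  choose v' hv' using fun j => (hS' j).2
  simp only [Set.mem_compl_iff] at hv hv'
  have key : ∀ x : Fin k → ZMod p, (if ∀ j, x j ∉ S j then b + a else a) =
      (if ∀ j, x j ∉ S' j then b' + a' else a') := by
    intro x; rw [← phi_eval', ← phi_eval']; exact heq x
  have haa : a = a' := by
    by_contra hne
    have i0 : Fin k := ⟨0, by omega⟩
    have hfu := key u
    have hRu : ¬ ∀ j, u j ∉ S j := fun h => h i0 (hu i0)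
    rw [if_neg hRu] at hfu
    have ha : a = b' + a' := by
      by_cases h : ∀ j, u j ∉ S' j
      · rwa [if_pos h] at hfu
      · rw [if_neg h] at hfu; exact absurd hfu hne
    have hfu' := key u'
    have hRu' : ¬ ∀ j, u' j ∉ S' j := fun h => h i0 (hu' i0)
    rw [if_neg hRu'] at hfu'
    have ha' : b + a = a' := by
      by_cases h : ∀ j, u' j ∉ S j
      · rwa [if_pos h] at hfu'
      · rw [if_neg h] at hfu'; exact absurd hfu' hne
    have hcompl : ∀ x : Fin k → ZMod p,
        (¬ ∀ j, x j ∉ S j) ↔ (∀ j, x j ∉ S' j) := by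
      intro x
      constructor
      · intro h
        by_contra h'
        have := key x
        rw [if_neg h, if_neg h'] at this
        exact hne this
      · intro h h'
        have := key x
        rw [if_pos h', if_pos h] at this
        have : b + a = a := by rw [this, ← ha]
        exact hb (by linear_combination this)
    have hk0 : 0 < k := by omega
    have hk1 : 1 < k := by omega
    have hw : ∀ i : Fin k, ∀ j : Fin k, j ≠ i → v j ∉ S' j := by
      intro i j hj
      have hmem : ¬ ∀ j', (fun j' => if j' = i then u j' else v j') j' ∉ S j' := by
        intro h
        exact h i (by simp [hu i])
      have := (hcompl _).mp hmem j
      simpa [hj] using this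
    have hvA' : ∀ j, v j ∉ S' j := by
      intro j
      by_cases h : j = (⟨0, hk0⟩ : Fin k)
      · refine hw ⟨1, hk1⟩ j ?_
        rw [h]; intro hh
        exact absurd (congrArg Fin.val hh) (by simp)
      · exact hw ⟨0, hk0⟩ j h
    have : ¬ ∀ j, v j ∉ S j := by
      rw [hcompl]; exact hvA'
    exact this (fun j => hv j)
  subst haa
  have hbox : ∀ x : Fin k → ZMod p, (∀ j, x j ∉ S j) ↔ (∀ j, x j ∉ S' j) := by
    intro x
    constructor
    · intro h
      by_contra h'
      have := key x
      rw [if_pos h, if_neg h'] at this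
      exact hb (by linear_combination this)
    · intro h
      by_contra h'
      have := key x
      rw [if_neg h', if_pos h] at this
      exact hb' (by linear_combination -this)
  have hbb : b = b' := by
    have := key v
    rw [if_pos (fun j => hv j), if_pos ((hbox v).mp fun j => hv j)] at this
    linear_combination this
  refine ⟨rfl, hbb, ?_⟩
  funext j
  ext t
  constructor
  · intro ht
    by_contra ht'
    have := (hbox (fun i => if i = j then t else v' i)).mpr ?_
    · exact (this j) (by simpa using ht)
    · intro i
      by_cases h : i = j
      · subst h; simpa using ht'
      · simpa [h] using hv' i
  · intro ht
    by_contra ht'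
    have := (hbox (fun i => if i = j then t else v i)).mp ?_
    · exact (this j) (by simpa using ht)
    · intro i
      by_cases h : i = j
      · subst h; simpa using ht'
      · simpa [h] using hv i

noncomputable def gInt (p : ℕ) (c : Bool × Fin (p - 1)) : Set (ZMod p) :=
  if c.1 then {x : ZMod p | x.val ≤ (c.2 : ℕ)}ᶜ else {x : ZMod p | x.val ≤ (c.2 : ℕ)}

lemma down_inj' {j j' : ℕ} (hj : j < p - 1) (hj' : j' < p - 1)
    (h : {x : ZMod p | x.val ≤ j} = {x : ZMod p | x.val ≤ j'}) : j = j' := by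
  haveI : NeZero p := ⟨(Fact.out : p.Prime).ne_zero⟩
  have hp : 2 ≤ p := (Fact.out : p.Prime).two_le
  have v1 : ((j : ℕ) : ZMod p).val = j := ZMod.val_natCast_of_lt (by omega)
  have v2 : ((j' : ℕ) : ZMod p).val = j' := ZMod.val_natCast_of_lt (by omega)
  have h1 : ((j : ℕ) : ZMod p) ∈ {x : ZMod p | x.val ≤ j'} := h ▸ (by simp [Set.mem_setOf_eq, v1])
  have h2 : ((j' : ℕ) : ZMod p) ∈ {x : ZMod p | x.val ≤ j} := h ▸ (by simp [Set.mem_setOf_eq, v2])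
  rw [Set.mem_setOf_eq, v1] at h1
  rw [Set.mem_setOf_eq, v2] at h2
  omega

lemma gInt_inj : Function.Injective (gInt p) := by
  haveI : NeZero p := ⟨(Fact.out : p.Prime).ne_zero⟩
  rintro ⟨c, j⟩ ⟨c', j'⟩ h
  have h0 : ∀ i : Fin (p - 1), (0 : ZMod p) ∈ {x : ZMod p | x.val ≤ (i : ℕ)} := by
    intro i; simp [Set.mem_setOf_eq, ZMod.val_zero]
  match c, c' with
  | false, false =>
      simp only [gInt, Bool.false_eq_true, if_false] at h
      rw [Prod.ext_iff]
      exact ⟨rfl, Fin.ext (down_inj' j.isLt j'.isLt h)⟩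
  | true, true =>
      simp only [gInt, if_true] at h
      have := compl_injective h
      rw [Prod.ext_iff]
      exact ⟨rfl, Fin.ext (down_inj' j.isLt j'.isLt this)⟩
  | false, true =>
      simp only [gInt, Bool.false_eq_true, if_false, if_true] at h
      have h1 := h0 j
      rw [h] at h1
      exact absurd (h1 (h0 j')) (fun hf => hf)
  | true, false =>
      simp only [gInt, Bool.false_eq_true, if_false, if_true] at h
      have h1 := h0 j'
      rw [← h] at h1
      exact absurd (h1 (h0 j)) (fun hf => hf)

lemma interval_iff_range' (S : Set (ZMod p)) :
    IsInterval p S ↔ S ∈ Set.range (gInt p) := by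
  have hp : 2 ≤ p := (Fact.out : p.Prime).two_le
  constructor
  · rintro ⟨j, hj, h | h⟩
    · exact ⟨(false, ⟨j, hj⟩), by simp [gInt, h]⟩
    · exact ⟨(true, ⟨j, hj⟩), by simp [gInt, h]⟩
  · rintro ⟨⟨c, j⟩, rfl⟩
    match c with
    | false => exact ⟨j, j.isLt, Or.inl (by simp [gInt])⟩
    | true => exact ⟨j, j.isLt, Or.inr (by simp [gInt])⟩

lemma card_intervals' : Nat.card {S : Set (ZMod p) // IsInterval p S} = 2 * (p - 1) := by
  have e1 : {S : Set (ZMod p) // IsInterval p S} ≃ (Set.range (gInt p)) :=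
    Equiv.subtypeEquivRight interval_iff_range'
  rw [Nat.card_congr e1, Nat.card_range_of_injective gInt_inj]
  simp [Nat.card_eq_fintype_card]

lemma card_nonzero' : Nat.card {a : ZMod p // a ≠ 0} = p - 1 := by
  haveI : NeZero p := ⟨(Fact.out : p.Prime).ne_zero⟩
  rw [Nat.card_eq_fintype_card]
  have := Fintype.card_subtype_compl (fun a : ZMod p => a = 0)
  simp only [Fintype.card_subtype_eq, ZMod.card] at this
  convert this using 2

noncomputable def Phi (p k : ℕ)
    (e : {a : ZMod p // a ≠ 0} × {b : ZMod p // b ≠ 0} ×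
      (Fin k → {S : Set (ZMod p) // IsInterval p S})) : (Fin k → ZMod p) → ZMod p :=
  fun x => (e.2.1 : ZMod p) * ∏ j, Q ((e.2.2 j : Set (ZMod p))) (x j) + (e.1 : ZMod p)

end Aux

/-- For `k ≥ 2`, the number of distinct functions `f : F_p^k → F_p` of the form
`f(x) = b·∏_j Q_{S_j}(x_j) + a` (`a, b ≠ 0`, `S_j` intervals) is `2^k·(p-1)^{k+2}`. -/
theorem stmt7 (p k : ℕ) [Fact p.Prime] (hk : 2 ≤ k) :
    Nat.card {f : (Fin k → ZMod p) → ZMod p //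
      ∃ (a b : ZMod p) (S : Fin k → Set (ZMod p)), a ≠ 0 ∧ b ≠ 0 ∧
        (∀ j, IsInterval p (S j)) ∧
        ∀ x : Fin k → ZMod p, f x = b * ∏ j, Q (S j) (x j) + a} =
      2 ^ k * (p - 1) ^ (k + 2) := by
  have hPhi : Function.Injective (Phi p k) := by
    rintro ⟨⟨a, ha⟩, ⟨b, hb⟩, S⟩ ⟨⟨a', ha'⟩, ⟨b', hb'⟩, S'⟩ h
    have heq : ∀ x : Fin k → ZMod p,
        b * (∏ j, Q ((S j : Set (ZMod p))) (x j)) + a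
          = b' * (∏ j, Q ((S' j : Set (ZMod p))) (x j)) + a' :=
      fun x => congrFun h x
    obtain ⟨h1, h2, h3⟩ := param_inj' hk a b a' b' (fun j => S j) (fun j => S' j) hb hb'
      (fun j => interval_nonempty' (S j).2) (fun j => interval_nonempty' (S' j).2) heq
    refine Prod.ext (Subtype.ext h1) (Prod.ext (Subtype.ext h2) ?_)
    funext j
    exact Subtype.ext (congrFun h3 j)
  have hrange : ∀ f : (Fin k → ZMod p) → ZMod p,
      (∃ (a b : ZMod p) (S : Fin k → Set (ZMod p)), a ≠ 0 ∧ b ≠ 0 ∧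
        (∀ j, IsInterval p (S j)) ∧
        ∀ x : Fin k → ZMod p, f x = b * ∏ j, Q (S j) (x j) + a)
      ↔ f ∈ Set.range (Phi p k) := by
    intro f
    constructor
    · rintro ⟨a, b, S, ha, hb, hint, hfx⟩
      exact ⟨⟨⟨a, ha⟩, ⟨b, hb⟩, fun j => ⟨S j, hint j⟩⟩, by funext x; exact (hfx x).symm⟩
    · rintro ⟨⟨⟨a, ha⟩, ⟨b, hb⟩, S⟩, rfl⟩
      exact ⟨a, b, fun j => S j, ha, hb, fun j => (S j).2, fun x => rfl⟩
  rw [Nat.card_congr (Equiv.subtypeEquivRight hrange),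
    Nat.card_range_of_injective hPhi]
  rw [Nat.card_prod, Nat.card_prod, card_nonzero']
  rw [Nat.card_fun]
  rw [card_intervals', Nat.card_eq_fintype_card, Fintype.card_fin]
  rw [mul_pow]
  ring
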